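/- Let k ≥ 3 and let ξ be a nonnegative integer random variable with E ξ = 1, Var ξ = σ² > 0, E ξ^{k+1} < ∞, and P{ξ ≥ k} > 0. Let q_x = P{𝒦(T) = x} for an unconditional ξ-Galton-Watson tree T. Then there exists x* such that for all x ≥ x*, q_x ≤ √(3 μ_k/σ²) · q_{x-1}^{k/2}, where μ_k = E binom(ξ, k). -/

import Mathlib

open scoped ENNReal

/-- Finite rooted ordered trees. -/
inductive RTree : Type where
  | node : List RTree → RTree

namespace RTree

/-- Number of nodes of a rooted tree. -/
def size : RTree → ℕ
  | node ts => 1 + (ts.attach.map (fun x => size x.1)).sum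
decreasing_by simp only [RTree.node.sizeOf_spec]; have := List.sizeOf_lt_of_mem x.2; omega

/-- The (standard) Horton-Strahler number: `0` at leaves; at an internal node, the
maximum of the children's values, plus one if the maximum is attained at least twice. -/
def HS : RTree → ℕ
  | node ts =>
    let vals := ts.attach.map (fun x => HS x.1)
    let m := vals.foldr max 0
    m + (if 2 ≤ (vals.filter (fun v => v == m)).length then 1 else 0)
decreasing_by simp only [RTree.node.sizeOf_spec]; have := List.sizeOf_lt_of_mem x.2; omega

/-- The French Horton-Strahler number: with children values sorted decreasingly as
`v₁ ≥ v₂ ≥ ⋯ ≥ v_k`, it equals `max_i (v_i + (i-1))`. -/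
def Fr : RTree → ℕ
  | node ts =>
    let vals := (ts.attach.map (fun x => Fr x.1)).mergeSort (fun a b => decide (b ≤ a))
    ((vals.zipIdx.map Prod.swap).map (fun p => p.2 + p.1)).foldr max 0
decreasing_by simp only [RTree.node.sizeOf_spec]; have := List.sizeOf_lt_of_mem x.2; omega

/-- The Canadian Horton-Strahler number: `v₁ + (r - 1)` where `r` is the number of
children attaining the maximal value `v₁`. -/
def Can : RTree → ℕ
  | node ts =>
    let vals := ts.attach.map (fun x => Can x.1)
    let m := vals.foldr max 0
    if vals.length = 0 then 0
    else m + ((vals.filter (fun v => v == m)).length - 1)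
decreasing_by simp only [RTree.node.sizeOf_spec]; have := List.sizeOf_lt_of_mem x.2; omega

/-- The rigid Horton-Strahler number: max of children's values, plus one if the node has
at least two children and all children attain the maximum. -/
def Rig : RTree → ℕ
  | node ts =>
    let vals := ts.attach.map (fun x => Rig x.1)
    let m := vals.foldr max 0
    if vals.length ≤ 1 then m
    else m + (if vals.all (fun v => v == m) then 1 else 0)
decreasing_by simp only [RTree.node.sizeOf_spec]; have := List.sizeOf_lt_of_mem x.2; omega

/-- The `k`-ary register function: with children values sorted decreasingly as
`𝒦₁ ≥ ⋯ ≥ 𝒦_ℓ`, it equals `max {𝒦₁, 𝒦_k + 1}` if `ℓ ≥ k` and `𝒦₁` otherwise. -/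
def Kreg (k : ℕ) : RTree → ℕ
  | node ts =>
    let vals := (ts.attach.map (fun x => Kreg k x.1)).mergeSort (fun a b => decide (b ≤ a))
    if k ≤ vals.length then max (vals.headD 0) (vals.getD (k - 1) 0 + 1)
    else vals.headD 0
decreasing_by simp only [RTree.node.sizeOf_spec]; have := List.sizeOf_lt_of_mem x.2; omega

/-- The Galton-Watson weight of a finite tree: the product over all nodes of the
offspring probability of the node's number of children.  For an offspring distribution
`p` summing to one, `∑' t with property P, gwWeight p t` is the probability that the
(almost surely finite) Galton-Watson tree satisfies `P`. -/
noncomputable def gwWeight (p : ℕ → ℝ≥0∞) : RTree → ℝ≥0∞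
  | node ts => p ts.length * (ts.attach.map (fun x => gwWeight p x.1)).prod
decreasing_by simp only [RTree.node.sizeOf_spec]; have := List.sizeOf_lt_of_mem x.2; omega

/-- The preorder degree sequence of a tree. -/
def degSeq : RTree → List ℕ
  | node ts => ts.length :: (ts.attach.map (fun x => degSeq x.1)).flatten
decreasing_by simp only [RTree.node.sizeOf_spec]; have := List.sizeOf_lt_of_mem x.2; omega

/-- Maximal number of children of any node in the tree. -/
def maxDeg : RTree → ℕ
  | node ts => max ts.length ((ts.attach.map (fun x => maxDeg x.1)).foldr max 0)
decreasing_by simp only [RTree.node.sizeOf_spec]; have := List.sizeOf_lt_of_mem x.2; omega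

/-- `EmbedsCBT h T`: a complete binary tree of height `h` embeds (in the topological
minor sense) into `T`. -/
inductive EmbedsCBT : ℕ → RTree → Prop where
  | zero (t : RTree) : EmbedsCBT 0 t
  | child (h : ℕ) (ts : List RTree) (t : RTree) (ht : t ∈ ts) (he : EmbedsCBT h t) :
      EmbedsCBT h (.node ts)
  | split (h : ℕ) (ts : List RTree) (i j : Fin ts.length) (hij : i ≠ j)
      (hi : EmbedsCBT h ts[i]) (hj : EmbedsCBT h ts[j]) :
      EmbedsCBT (h + 1) (.node ts)

/-- `EmbedsCKT k h T`: a complete `k`-ary tree of height `h` embeds into `T`. -/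
inductive EmbedsCKT (k : ℕ) : ℕ → RTree → Prop where
  | zero (t : RTree) : EmbedsCKT k 0 t
  | child (h : ℕ) (ts : List RTree) (t : RTree) (ht : t ∈ ts) (he : EmbedsCKT k h t) :
      EmbedsCKT k h (.node ts)
  | split (h : ℕ) (ts : List RTree) (s : Finset (Fin ts.length)) (hcard : s.card = k)
      (hall : ∀ i ∈ s, EmbedsCKT k h ts[i]) :
      EmbedsCKT k (h + 1) (.node ts)

end RTree

/-!
Write `s x` for the probability that `𝒦(T) ≥ x` and `μ j = E (ξ choose j)`. A critical
Galton-Watson tree is almost surely finite, and the subtrees of the root are independent copies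
of `T`. The root reaches level `x + 1` only if some child does or `k` children reach level `x`.
Applying the Bonferroni inequality `1{A ≥ 1} ≤ A - (A choose 2) + (A choose 3)` to the number `A`
of children at level `x + 1`, and averaging with `E (A choose j) = μ j * s (x + 1) ^ j`, gives
`s (x + 1) + μ 2 s (x + 1)² ≤ μ 1 s (x + 1) + μ 3 s (x + 1)³ + μ k s x ^ k`, that is
`σ²/2 · s (x + 1)² ≤ μ 3 s (x + 1)³ + μ k s x ^ k` because `μ 1 = 1` and `μ 2 = σ²/2`.
Since `s x → 0`, eventually `s (x + 1)² ≤ 5/2 · μ k/σ² · s x ^ k`; as `k ≥ 3` this makes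
`s (x + 1)` negligible against `s x`, so `q x = s x - s (x + 1)` is comparable to `s x`, and
`q (x + 1)² ≤ 3 μ k/σ² · q x ^ k` follows.
-/

open Finset Filter Topology

theorem Finset.choose_card_filter_eq_sum_prod {ι R : Type*} [CommSemiring R] (s : Finset ι)
    (P : ι → Prop) [DecidablePred P] (j : ℕ) :
    ((#(s.filter P)).choose j : R) = ∑ T ∈ s.powersetCard j, ∏ i ∈ T, if P i then 1 else 0 := by
  have : (s.powersetCard j).filter (fun T => ∀ i ∈ T, P i) = (s.filter P).powersetCard j := by
    ext T
    simp only [mem_filter, mem_powersetCard, subset_iff]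
    grind
  simp_rw [prod_boole, sum_boole, this, card_powersetCard]

theorem Fintype.prod_ite_mem_const {ι M : Type*} [Fintype ι] [DecidableEq ι] [CommMonoid M]
    (T : Finset ι) (a b : M) :
    ∏ i, (if i ∈ T then a else b) = a ^ #T * b ^ (Fintype.card ι - #T) := by
  rw [prod_ite, prod_const, prod_const, filter_mem_eq_inter, univ_inter, filter_not,
    filter_mem_eq_inter, univ_inter, card_sdiff_of_subset (subset_univ T), card_univ]

theorem List.countP_ofFn {α : Type*} {n : ℕ} (f : Fin n → α) (P : α → Prop) [DecidablePred P] :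
    (List.ofFn f).countP (P ·) = #{i | P (f i)} := by
  rw [← Multiset.coe_countP, ← Fin.univ_val_map, Multiset.countP_map]
  rfl

theorem List.Pairwise.succ_le_countP_of_le_getElem {α : Type*} [Preorder α] [DecidableLE α]
    {L : List α} (hL : L.Pairwise (· ≥ ·)) {i : ℕ} (hi : i < L.length) {y : α} (hy : y ≤ L[i]) :
    i + 1 ≤ L.countP (y ≤ ·) := by
  have htake : ∀ a ∈ L.take (i + 1), y ≤ a := by
    intro a ha
    obtain ⟨j, hj, rfl⟩ := List.mem_take_iff_getElem.1 ha
    rcases (Nat.lt_succ_iff.1 (lt_min_iff.1 hj).1).lt_or_eq with hji | rfl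
    · exact hy.trans (List.pairwise_iff_getElem.1 hL j i _ hi hji)
    · exact hy
  calc i + 1 = (L.take (i + 1)).countP (y ≤ ·) := by
        rw [List.countP_eq_length.2 (by simpa using htake), List.length_take]; omega
    _ ≤ L.countP (y ≤ ·) := (List.take_sublist _ _).countP_le

theorem Nat.choose_two_lt_add_choose_three {A : ℕ} (hA : 0 < A) :
    A.choose 2 < A + A.choose 3 := by
  obtain ⟨B, rfl⟩ := Nat.exists_eq_add_of_lt hA
  have h2 : (B + 1).choose 2 = B.choose 1 + B.choose 2 := Nat.choose_succ_succ B 1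
  have h3 : (B + 1).choose 3 = B.choose 2 + B.choose 3 := Nat.choose_succ_succ B 2
  rw [zero_add, h2, h3, Nat.choose_one_right]
  omega

theorem Nat.choose_two_le_add_choose_three (A : ℕ) : A.choose 2 ≤ A + A.choose 3 := by
  rcases A.eq_zero_or_pos with rfl | hA
  · simp
  · exact (Nat.choose_two_lt_add_choose_three hA).le

/-- Bonferroni's inequality `1{A ≥ 1} ≤ A - (A choose 2) + (A choose 3)`. -/
theorem Nat.ite_add_choose_two_le {P : Prop} [Decidable P] {A M k : ℕ} (h : P → 0 < A ∨ k ≤ M) :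
    (if P then 1 else 0) + A.choose 2 ≤ A.choose 1 + A.choose 3 + M.choose k := by
  rw [Nat.choose_one_right]
  split_ifs with hP
  · rcases h hP with hA | hM
    · linarith [Nat.choose_two_lt_add_choose_three hA]
    · linarith [Nat.choose_pos hM, Nat.choose_two_le_add_choose_three A]
  · linarith [Nat.choose_two_le_add_choose_three A]

theorem Nat.two_mul_choose_two_add_self (n : ℕ) : 2 * n.choose 2 + n = n ^ 2 := by
  induction n with
  | zero => rfl
  | succ m ih =>
    have h : (m + 1).choose 2 = m.choose 1 + m.choose 2 := Nat.choose_succ_succ m 1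
    rw [h, Nat.choose_one_right]
    nlinarith [ih]

theorem ENNReal.tsum_fin_pi_prod {α : Type*} :
    ∀ (n : ℕ) (g : Fin n → α → ℝ≥0∞), ∑' v : Fin n → α, ∏ i, g i (v i) = ∏ i, ∑' a, g i a
  | 0, g => by simp
  | n + 1, g => by
    rw [← (Fin.consEquiv fun _ => α).tsum_eq, ENNReal.tsum_prod', Fin.prod_univ_succ,
      ← ENNReal.tsum_fin_pi_prod n, ← ENNReal.tsum_mul_right]
    refine tsum_congr fun a => ?_
    rw [← ENNReal.tsum_mul_left]
    simp [Fin.prod_univ_succ]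

theorem ENNReal.tsum_fin_pi_prod_mul_choose {α : Type*} (f : α → ℝ≥0∞) (P : α → Prop)
    [DecidablePred P] (n j : ℕ) :
    ∑' v : Fin n → α, (∏ i, f (v i)) * ((#{i | P (v i)}).choose j : ℝ≥0∞) =
      n.choose j * (∑' a, if P a then f a else 0) ^ j * (∑' a, f a) ^ (n - j) := by
  let g (T : Finset (Fin n)) (i : Fin n) (a : α) : ℝ≥0∞ :=
    f a * if i ∈ T then (if P a then 1 else 0) else 1
  have hg (v : Fin n → α) : (∏ i, f (v i)) * ((#{i | P (v i)}).choose j : ℝ≥0∞) =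
      ∑ T ∈ univ.powersetCard j, ∏ i, g T i (v i) := by
    simp only [g, choose_card_filter_eq_sum_prod, mul_sum, prod_mul_distrib, prod_ite_mem,
      univ_inter]
  have hg' (T : Finset (Fin n)) (i : Fin n) :
      ∑' a, g T i a = if i ∈ T then ∑' a, (if P a then f a else 0) else ∑' a, f a := by
    by_cases hi : i ∈ T <;> simp only [g, hi, if_true, if_false, mul_ite, mul_one, mul_zero]
  rw [tsum_congr hg, Summable.tsum_finsetSum fun _ _ => ENNReal.summable]
  simp_rw [tsum_fin_pi_prod, hg', Fintype.prod_ite_mem_const]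
  rw [sum_congr rfl fun T hT => by rw [(mem_powersetCard.1 hT).2], sum_const, card_powersetCard]
  simp [mul_assoc]

theorem ENNReal.one_le_pow_add_mul_tsub {w : ℝ≥0∞} (hw : w ≤ 1) (n : ℕ) :
    1 ≤ w ^ n + n * (1 - w) := by
  lift w to NNReal using ne_top_of_le_ne_top one_ne_top hw
  rw [← coe_one, ← coe_sub, ← coe_pow, ← coe_natCast, ← coe_mul, ← coe_add, coe_le_coe,
    ← NNReal.coe_le_coe]
  push_cast [NNReal.coe_sub (coe_le_one_iff.1 hw)]
  linarith [one_add_mul_sub_le_pow (by linarith [w.coe_nonneg] : (-1 : ℝ) ≤ w) n]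

theorem ENNReal.one_lt_pow_add_mul_tsub {w : ℝ≥0∞} (hw : w < 1) {n : ℕ} (hn : 2 ≤ n) :
    1 < w ^ n + n * (1 - w) := by
  lift w to NNReal using ne_top_of_lt hw
  rw [← coe_one, ← coe_sub, ← coe_pow, ← coe_natCast, ← coe_mul, ← coe_add, coe_lt_coe,
    ← NNReal.coe_lt_coe]
  push_cast [NNReal.coe_sub (coe_lt_one_iff.1 hw).le]
  have hw' : (w : ℝ) < 1 := by exact_mod_cast hw
  have h := one_add_mul_self_lt_rpow_one_add (s := (w : ℝ) - 1) (by linarith [w.coe_nonneg])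
    (by linarith) (p := n) (by exact_mod_cast hn)
  rw [add_sub_cancel, Real.rpow_natCast] at h
  linarith

theorem ENNReal.le_rpow_half_mul_rpow_of_sq_le {a b C : ℝ≥0∞} {k : ℕ} (h : a ^ 2 ≤ C * b ^ k) :
    a ≤ C ^ ((1 : ℝ) / 2) * b ^ ((k : ℝ) / 2) := by
  calc a = (a ^ 2) ^ ((1 : ℝ) / 2) := by
        rw [← ENNReal.rpow_natCast, ← ENNReal.rpow_mul]; norm_num
    _ ≤ (C * b ^ k) ^ ((1 : ℝ) / 2) := by gcongr
    _ = C ^ ((1 : ℝ) / 2) * b ^ ((k : ℝ) / 2) := by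
        rw [ENNReal.mul_rpow_of_nonneg _ _ (by norm_num), ← ENNReal.rpow_natCast,
          ← ENNReal.rpow_mul]
        ring_nf

noncomputable def binomMoment (p : ℕ → ℝ≥0∞) (j : ℕ) : ℝ≥0∞ :=
  ∑' n : ℕ, (n.choose j : ℝ≥0∞) * p n

theorem tsum_sq_mul_eq_binomMoment (p : ℕ → ℝ≥0∞) :
    ∑' n : ℕ, (n : ℝ≥0∞) ^ 2 * p n = 2 * binomMoment p 2 + binomMoment p 1 := by
  simp only [binomMoment, ← ENNReal.tsum_mul_left, ← ENNReal.tsum_add, ← mul_assoc, ← add_mul,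
    Nat.choose_one_right]
  congr with n
  rw [← Nat.cast_pow, ← Nat.two_mul_choose_two_add_self n]
  push_cast
  rfl

theorem binomMoment_ne_top {p : ℕ → ℝ≥0∞} {j d : ℕ} (hj : j ≠ 0) (hjd : j ≤ d)
    (hp : ∑' n : ℕ, (n : ℝ≥0∞) ^ d * p n ≠ ⊤) : binomMoment p j ≠ ⊤ := by
  refine ne_top_of_le_ne_top hp (ENNReal.tsum_le_tsum fun n => ?_)
  gcongr
  rcases n.eq_zero_or_pos with rfl | hn
  · simp [Nat.choose_eq_zero_of_lt (Nat.pos_of_ne_zero hj)]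
  · exact_mod_cast (Nat.choose_le_pow n j).trans (Nat.pow_le_pow_right hn hjd)

theorem binomMoment_one {p : ℕ → ℝ≥0∞} (hmean : ∑' i : ℕ, (i : ℝ≥0∞) * p i = 1) :
    binomMoment p 1 = 1 := by
  simpa [binomMoment] using hmean

theorem binomMoment_two_eq {p : ℕ → ℝ≥0∞} (hmean : ∑' i : ℕ, (i : ℝ≥0∞) * p i = 1) :
    binomMoment p 2 = ((∑' i : ℕ, (i : ℝ≥0∞) ^ 2 * p i) - 1) / 2 :=
  (ENNReal.eq_div_iff two_ne_zero ENNReal.ofNat_ne_top).2 <| by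
    rw [tsum_sq_mul_eq_binomMoment, binomMoment_one hmean,
      ENNReal.add_sub_cancel_right ENNReal.one_ne_top]

section TailRecursion

variable {S Q : ℕ → ℝ} {k : ℕ}

theorem eventually_sq_le_pow_of_quadratic_bound {V B M : ℝ} (hV : 0 < V)
    (hS : Tendsto S atTop (𝓝 0))
    (h : ∀ x, V / 2 * S (x + 1) ^ 2 ≤ B * S (x + 1) ^ 3 + M * S x ^ k) :
    ∀ᶠ x in atTop, S (x + 1) ^ 2 ≤ 5 / 2 * (M / V) * S x ^ k := by
  have hB : Tendsto (fun x => B * S (x + 1)) atTop (𝓝 0) := by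
    simpa using (hS.comp (tendsto_add_atTop_nat 1)).const_mul B
  filter_upwards [hB.eventually_le_const (by positivity : (0 : ℝ) < V / 10)] with x hx
  have : 2 * V / 5 * S (x + 1) ^ 2 ≤ M * S x ^ k := by
    nlinarith [h x, mul_le_mul_of_nonneg_right hx (sq_nonneg (S (x + 1)))]
  calc S (x + 1) ^ 2 = 5 / (2 * V) * (2 * V / 5 * S (x + 1) ^ 2) := by field_simp
    _ ≤ 5 / (2 * V) * (M * S x ^ k) := by gcongr
    _ = 5 / 2 * (M / V) * S x ^ k := by field_simp

theorem eventually_le_mul_of_sq_le_pow (hk : 3 ≤ k) (hS₀ : ∀ x, 0 ≤ S x)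
    (hS : Tendsto S atTop (𝓝 0)) {K ε : ℝ} (hε : 0 < ε)
    (h : ∀ᶠ x in atTop, S (x + 1) ^ 2 ≤ K * S x ^ k) :
    ∀ᶠ x in atTop, S (x + 1) ≤ ε * S x := by
  have hK : Tendsto (fun x => K * S x ^ (k - 2)) atTop (𝓝 0) := by
    simpa [zero_pow (by omega : k - 2 ≠ 0)] using (hS.pow (k - 2)).const_mul K
  filter_upwards [h, hK.eventually_le_const (by positivity : (0 : ℝ) < ε ^ 2)] with x hx hKx
  refine (pow_le_pow_iff_left₀ (hS₀ _) (by have := hS₀ x; positivity) two_ne_zero).1 ?_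
  calc S (x + 1) ^ 2 ≤ K * S x ^ (k - 2) * S x ^ 2 := by
        rwa [mul_assoc, ← pow_add, Nat.sub_add_cancel (by omega)]
    _ ≤ ε ^ 2 * S x ^ 2 := by gcongr
    _ = (ε * S x) ^ 2 := by ring

theorem pow_le_six_fifths_mul_pow {s q : ℝ} (hs : 0 ≤ s) (h : s ≤ q + s / (6 * k)) :
    s ^ k ≤ 6 / 5 * q ^ k := by
  rcases k.eq_zero_or_pos with rfl | hk
  · norm_num
  have hk' : (1 : ℝ) ≤ k := by exact_mod_cast hk
  have hk6 : 1 / (6 * (k : ℝ)) ≤ 1 := by rw [div_le_one (by positivity)]; linarith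
  have hbern : (5 / 6 : ℝ) ≤ (1 - 1 / (6 * k)) ^ k :=
    calc (5 / 6 : ℝ) = 1 + k * -(1 / (6 * k)) := by field_simp; ring
      _ ≤ (1 + -(1 / (6 * k))) ^ k := one_add_mul_le_pow (by linarith) k
      _ = (1 - 1 / (6 * k)) ^ k := by ring
  have hq : (1 - 1 / (6 * k)) * s ≤ q := by
    have : s / (6 * k) = 1 / (6 * k) * s := by ring
    linarith
  have hq' : 0 ≤ (1 - 1 / (6 * k)) * s := by
    refine mul_nonneg ?_ hs
    linarith
  calc s ^ k = 6 / 5 * (5 / 6 * s ^ k) := by ring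
    _ ≤ 6 / 5 * ((1 - 1 / (6 * k)) ^ k * s ^ k) := by gcongr
    _ = 6 / 5 * ((1 - 1 / (6 * k)) * s) ^ k := by rw [mul_pow]
    _ ≤ 6 / 5 * q ^ k := by gcongr

theorem eventually_sq_le_of_tail (hk : 3 ≤ k) (hS₀ : ∀ x, 0 ≤ S x) (hQ₀ : ∀ x, 0 ≤ Q x)
    (hSQ : ∀ x, S x = Q x + S (x + 1)) (hS : Tendsto S atTop (𝓝 0)) {V B M : ℝ} (hV : 0 < V)
    (hM : 0 ≤ M) (h : ∀ x, V / 2 * S (x + 1) ^ 2 ≤ B * S (x + 1) ^ 3 + M * S x ^ k) :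
    ∀ᶠ x in atTop, Q (x + 1) ^ 2 ≤ 3 * M / V * Q x ^ k := by
  have hsq := eventually_sq_le_pow_of_quadratic_bound hV hS h
  have hk6 : (0 : ℝ) < 1 / (6 * k) := by positivity
  filter_upwards [hsq, eventually_le_mul_of_sq_le_pow hk hS₀ hS hk6 hsq] with x hx hratio
  have hQS : Q (x + 1) ≤ S (x + 1) := by linarith [hSQ (x + 1), hS₀ (x + 2)]
  have hSk : S x ^ k ≤ 6 / 5 * Q x ^ k :=
    pow_le_six_fifths_mul_pow (hS₀ x) (by rw [← one_div_mul_eq_div]; linarith [hSQ x])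
  calc Q (x + 1) ^ 2 ≤ S (x + 1) ^ 2 := by gcongr; exact hQ₀ _
    _ ≤ 5 / 2 * (M / V) * S x ^ k := hx
    _ ≤ 5 / 2 * (M / V) * (6 / 5 * Q x ^ k) := by gcongr
    _ = 3 * M / V * Q x ^ k := by ring

end TailRecursion

theorem ENNReal.eventually_sq_le_of_tail {s q : ℕ → ℝ≥0∞} {V B M : ℝ≥0∞} {k : ℕ} (hk : 3 ≤ k)
    (hs : ∀ x, s x ≠ ⊤) (hsq : ∀ x, s x = q x + s (x + 1)) (hs₀ : Tendsto s atTop (𝓝 0))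
    (hV₀ : V ≠ 0) (hV : V ≠ ⊤) (hB : B ≠ ⊤) (hM : M ≠ ⊤)
    (h : ∀ x, V / 2 * s (x + 1) ^ 2 ≤ B * s (x + 1) ^ 3 + M * s x ^ k) :
    ∀ᶠ x in atTop, q (x + 1) ^ 2 ≤ 3 * M / V * q x ^ k := by
  have hq (x : ℕ) : q x ≠ ⊤ := ne_top_of_le_ne_top (hs x) (hsq x ▸ le_self_add)
  have hreal := _root_.eventually_sq_le_of_tail (S := fun x => (s x).toReal)
    (Q := fun x => (q x).toReal) (V := V.toReal) (B := B.toReal) (M := M.toReal) hk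
    (fun _ => toReal_nonneg) (fun _ => toReal_nonneg)
    (fun x => by rw [hsq x, toReal_add (hq x) (hs _)])
    ((tendsto_toReal zero_ne_top).comp hs₀) (toReal_pos hV₀ hV) toReal_nonneg fun x => by
      have h₁ : B * s (x + 1) ^ 3 ≠ ⊤ := mul_ne_top hB (pow_ne_top (hs _))
      have h₂ : M * s x ^ k ≠ ⊤ := mul_ne_top hM (pow_ne_top (hs _))
      simpa [toReal_add h₁ h₂, toReal_mul, toReal_div, toReal_pow] using
        toReal_mono (add_ne_top.2 ⟨h₁, h₂⟩) (h x)
  filter_upwards [hreal] with x hx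
  rw [← toReal_le_toReal (by simp [hq]) (by simp [hq, hM, hV₀, div_eq_top, mul_eq_top])]
  simpa [toReal_mul, toReal_div, toReal_pow] using hx

namespace RTree

def children : RTree → List RTree
  | node ts => ts

def nodeEquiv : List RTree ≃ RTree where
  toFun := node
  invFun := children
  left_inv _ := rfl
  right_inv t := by cases t; rfl

theorem gwWeight_node (p : ℕ → ℝ≥0∞) (ts : List RTree) :
    gwWeight p (node ts) = p ts.length * (ts.map (gwWeight p)).prod := by
  rw [gwWeight, List.attach_map_val]

theorem size_node (ts : List RTree) : size (node ts) = 1 + (ts.map size).sum := by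
  rw [size, List.attach_map_val]

noncomputable def gwMass (p : ℕ → ℝ≥0∞) (P : RTree → Prop) [DecidablePred P] : ℝ≥0∞ :=
  ∑' t, if P t then gwWeight p t else 0

variable (p : ℕ → ℝ≥0∞)

theorem tsum_gwWeight_mul (φ : RTree → ℝ≥0∞) :
    ∑' t, gwWeight p t * φ t =
      ∑' n, p n * ∑' v : Fin n → RTree, (∏ i, gwWeight p (v i)) * φ (node (List.ofFn v)) := by
  rw [← nodeEquiv.tsum_eq, ← List.equivSigmaTuple.symm.tsum_eq, ENNReal.tsum_sigma']
  refine tsum_congr fun n => ?_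
  rw [← ENNReal.tsum_mul_left]
  refine tsum_congr fun v => ?_
  change gwWeight p (node (List.ofFn v)) * φ (node (List.ofFn v)) = _
  rw [gwWeight_node, List.map_ofFn, List.prod_ofFn, List.length_ofFn, mul_assoc]
  rfl

theorem gwMass_eq_tsum_mul (P : RTree → Prop) [DecidablePred P] :
    gwMass p P = ∑' t, gwWeight p t * if P t then 1 else 0 := by
  simp only [gwMass, mul_ite, mul_one, mul_zero]

theorem gwMass_le_tsum (P : RTree → Prop) [DecidablePred P] :
    gwMass p P ≤ ∑' t, gwWeight p t :=
  ENNReal.tsum_le_tsum fun t => by split_ifs <;> simp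

theorem gwMass_le_eq_add (f : RTree → ℕ) (x : ℕ) :
    gwMass p (x ≤ f ·) = gwMass p (f · = x) + gwMass p (x + 1 ≤ f ·) := by
  simp only [gwMass, ← ENNReal.tsum_add]
  refine tsum_congr fun t => ?_
  split_ifs <;> first | omega | simp

theorem gwMass_le_eq_tsum (f : RTree → ℕ) (x : ℕ) :
    gwMass p (x ≤ f ·) = ∑' i, gwMass p (f · = i + x) := by
  simp only [gwMass]
  rw [ENNReal.tsum_comm]
  refine tsum_congr fun t => ?_
  split_ifs with h
  · rw [tsum_eq_single (f t - x) fun i hi => if_neg (by omega), if_pos (by omega)]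
  · exact (ENNReal.tsum_eq_zero.2 fun i => if_neg (by omega)).symm

theorem tendsto_gwMass_le (hW : ∑' t, gwWeight p t ≠ ⊤) (f : RTree → ℕ) :
    Tendsto (fun x => gwMass p (x ≤ f ·)) atTop (𝓝 0) := by
  simp_rw [gwMass_le_eq_tsum p f]
  refine ENNReal.tendsto_sum_nat_add (fun i => gwMass p (f · = i)) (ne_top_of_le_ne_top hW ?_)
  simpa only [gwMass_le_eq_tsum, add_zero] using gwMass_le_tsum p (0 ≤ f ·)

theorem gwMass_size_le_le_one (hsum : ∑' i, p i = 1) (N : ℕ) :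
    gwMass p (fun t => t.size ≤ N) ≤ 1 := by
  induction N with
  | zero =>
    refine le_of_eq_of_le (ENNReal.tsum_eq_zero.2 fun t => if_neg ?_) zero_le_one
    cases t
    simp only [size_node]
    omega
  | succ N ih =>
    rw [gwMass_eq_tsum_mul, tsum_gwWeight_mul]
    refine le_of_le_of_eq (ENNReal.tsum_le_tsum fun n => ?_) hsum
    calc p n * ∑' v : Fin n → RTree, (∏ i, gwWeight p (v i)) *
          (if (node (List.ofFn v)).size ≤ N + 1 then 1 else 0)
        ≤ p n * ∑' v : Fin n → RTree, ∏ i, gwWeight p (v i) * if (v i).size ≤ N then 1 else 0 := by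
          gcongr with v
          split_ifs with h
          · have hle (i : Fin n) : (v i).size ≤ N := by
              have hmem : v i ∈ List.ofFn v := List.mem_ofFn.2 ⟨i, rfl⟩
              have := List.le_sum_of_mem (List.mem_map_of_mem (f := size) hmem)
              rw [size_node] at h
              omega
            simp [hle]
          · simp
      _ = p n * gwMass p (fun t => t.size ≤ N) ^ n := by
          rw [ENNReal.tsum_fin_pi_prod n fun _ t => gwWeight p t * if t.size ≤ N then 1 else 0,
            prod_const, card_univ, Fintype.card_fin, gwMass_eq_tsum_mul]
      _ ≤ p n := mul_le_of_le_one_right' (pow_le_one' ih n)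

theorem tsum_gwWeight_le_one (hsum : ∑' i, p i = 1) : ∑' t, gwWeight p t ≤ 1 := by
  rw [ENNReal.tsum_eq_iSup_sum]
  refine iSup_le fun F => ?_
  calc ∑ t ∈ F, gwWeight p t = ∑ t ∈ F, if t.size ≤ F.sup size then gwWeight p t else 0 :=
        sum_congr rfl fun t ht => (if_pos (le_sup ht)).symm
    _ ≤ 1 := (ENNReal.sum_le_tsum F).trans (gwMass_size_le_le_one p hsum _)

theorem tsum_gwWeight_eq_tsum_mul_pow :
    ∑' t, gwWeight p t = ∑' n, p n * (∑' t, gwWeight p t) ^ n := by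
  simpa [ENNReal.tsum_fin_pi_prod] using tsum_gwWeight_mul p 1

theorem tsum_gwWeight_eq_one (hsum : ∑' i, p i = 1) (hmean : ∑' i : ℕ, (i : ℝ≥0∞) * p i = 1)
    (hp : ∃ i, 2 ≤ i ∧ 0 < p i) : ∑' t, gwWeight p t = 1 := by
  set W := ∑' t, gwWeight p t
  have hW : W ≤ 1 := tsum_gwWeight_le_one p hsum
  refine hW.antisymm (not_lt.1 fun hlt => lt_irrefl (1 : ℝ≥0∞) ?_)
  obtain ⟨i, hi, hpi⟩ := hp
  have hpi_top : p i ≠ ⊤ := ne_top_of_le_ne_top ENNReal.one_ne_top (hsum ▸ ENNReal.le_tsum i)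
  -- `W` is a fixed point of `f w = ∑ p n * w ^ n` (`⊤` is one too, whence `W ≤ 1`); for `W < 1`,
  -- Bernoulli's inequality, strict at `i`, gives `1 < f W + f' 1 * (1 - W) = 1`.
  calc 1 = ∑' n, p n * 1 := by simp [hsum]
    _ < ∑' n, p n * (W ^ n + n * (1 - W)) :=
        ENNReal.tsum_lt_tsum (by simp [hsum])
          (fun n => by gcongr; exact ENNReal.one_le_pow_add_mul_tsub hW n)
          (ENNReal.mul_lt_mul_right hpi.ne' hpi_top (ENNReal.one_lt_pow_add_mul_tsub hlt hi))
    _ = W + (∑' n : ℕ, (n : ℝ≥0∞) * p n) * (1 - W) := by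
        have (n : ℕ) : p n * (W ^ n + n * (1 - W)) = p n * W ^ n + n * p n * (1 - W) := by ring
        rw [tsum_congr this, ENNReal.tsum_add, ENNReal.tsum_mul_right,
          ← tsum_gwWeight_eq_tsum_mul_pow]
    _ = 1 := by rw [hmean, one_mul, add_tsub_cancel_of_le hW]

theorem tsum_gwWeight_mul_choose_countP (hW : ∑' t, gwWeight p t = 1) (P : RTree → Prop)
    [DecidablePred P] (j : ℕ) :
    ∑' t, gwWeight p t * ((t.children.countP (P ·)).choose j : ℝ≥0∞) =
      binomMoment p j * gwMass p P ^ j := by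
  rw [tsum_gwWeight_mul, binomMoment, ← ENNReal.tsum_mul_right]
  refine tsum_congr fun n => ?_
  simp only [children, List.countP_ofFn, ENNReal.tsum_fin_pi_prod_mul_choose, hW, one_pow, mul_one]
  rw [gwMass]
  ring

theorem exists_le_Kreg_or_le_countP {k x : ℕ} {ts : List RTree} (h : x + 1 ≤ Kreg k (node ts)) :
    (∃ c ∈ ts, x + 1 ≤ Kreg k c) ∨ k ≤ ts.countP (x ≤ Kreg k ·) := by
  rw [Kreg, List.attach_map_val] at h
  set L := (ts.map (Kreg k)).mergeSort fun a b => decide (b ≤ a)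
  have hperm : L.Perm (ts.map (Kreg k)) := List.mergeSort_perm _ _
  have hsorted : L.Pairwise (· ≥ ·) := by
    simpa using List.pairwise_mergeSort (le := fun a b : ℕ => decide (b ≤ a))
      (by simp only [decide_eq_true_eq]; omega)
      (by simp only [Bool.or_eq_true, decide_eq_true_eq]; omega) _
  have head_case (hx : x + 1 ≤ L.headD 0) : ∃ c ∈ ts, x + 1 ≤ Kreg k c := by
    rcases hL : L with _ | ⟨a, L'⟩
    · simp [hL] at hx
    · obtain ⟨c, hc, rfl⟩ := List.mem_map.1 (hperm.subset (hL ▸ List.mem_cons_self))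
      exact ⟨c, hc, by simpa [hL] using hx⟩
  split_ifs at h with hk
  · rcases le_max_iff.1 h with h | h
    · exact .inl (head_case h)
    · right
      obtain _ | k := k
      · exact Nat.zero_le _
      rw [Nat.add_sub_cancel, List.getD_eq_getElem _ _ (by omega)] at h
      simpa [hperm.countP_eq, List.countP_map, Function.comp_def] using
        hsorted.succ_le_countP_of_le_getElem (by omega) (by omega : x ≤ L[k])
  · exact .inl (head_case h)

theorem binomMoment_two_mul_sq_le (hW : ∑' t, gwWeight p t = 1)
    (hmean : ∑' i : ℕ, (i : ℝ≥0∞) * p i = 1) (k x : ℕ) :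
    binomMoment p 2 * gwMass p (x + 1 ≤ Kreg k ·) ^ 2 ≤
      binomMoment p 3 * gwMass p (x + 1 ≤ Kreg k ·) ^ 3 +
        binomMoment p k * gwMass p (x ≤ Kreg k ·) ^ k := by
  have hfin : gwMass p (x + 1 ≤ Kreg k ·) ≠ ⊤ :=
    ne_top_of_le_ne_top (hW ▸ ENNReal.one_ne_top) (gwMass_le_tsum p _)
  have key (t : RTree) :
      gwWeight p t * ((if x + 1 ≤ Kreg k t then 1 else 0) +
        (t.children.countP (x + 1 ≤ Kreg k ·)).choose 2) ≤
      gwWeight p t * ((t.children.countP (x + 1 ≤ Kreg k ·)).choose 1 +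
        (t.children.countP (x + 1 ≤ Kreg k ·)).choose 3 +
        (t.children.countP (x ≤ Kreg k ·)).choose k : ℝ≥0∞) := by
    obtain ⟨ts⟩ := t
    refine mul_le_mul_right ?_ _
    have := Nat.ite_add_choose_two_le (P := x + 1 ≤ Kreg k (node ts))
      (A := ts.countP (x + 1 ≤ Kreg k ·)) (M := ts.countP (x ≤ Kreg k ·)) (k := k) fun h => by
      rcases exists_le_Kreg_or_le_countP h with ⟨c, hc, hxc⟩ | hM
      · exact .inl (List.countP_pos_iff.2 ⟨c, hc, by simpa using hxc⟩)
      · exact .inr hM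
    exact_mod_cast this
  have := ENNReal.tsum_le_tsum key
  simp only [mul_add, ENNReal.tsum_add, tsum_gwWeight_mul_choose_countP p hW, ← gwMass_eq_tsum_mul,
    binomMoment_one hmean, pow_one, one_mul] at this
  rwa [add_assoc, ENNReal.add_le_add_iff_left hfin] at this

end RTree

/-- tail recursion for the `k`-ary register function of a critical
Galton-Watson tree: for large `x`, `q_x ≤ √(3 μ_k/σ²) q_{x-1}^{k/2}`. -/
theorem kary_register_tail_recursion (k : ℕ) (hk : 3 ≤ k) (p : ℕ → ℝ≥0∞)
    (hsum : ∑' i : ℕ, p i = 1) (hmean : ∑' i : ℕ, (i : ℝ≥0∞) * p i = 1)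
    (hvarpos : 1 < ∑' i : ℕ, (i : ℝ≥0∞) ^ 2 * p i)
    (hmom : ∑' i : ℕ, (i : ℝ≥0∞) ^ (k + 1) * p i < ⊤)
    (hpk : ∃ i, k ≤ i ∧ 0 < p i) :
    ∃ xs : ℕ, ∀ x : ℕ, xs ≤ x →
      (∑' t : RTree, if RTree.Kreg k t = x then RTree.gwWeight p t else 0) ≤
        (3 * (∑' i : ℕ, (Nat.choose i k : ℝ≥0∞) * p i) /
            ((∑' i : ℕ, (i : ℝ≥0∞) ^ 2 * p i) - 1)) ^ ((1 : ℝ) / 2) *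
          (∑' t : RTree, if RTree.Kreg k t = x - 1 then RTree.gwWeight p t else 0) ^
            ((k : ℝ) / 2) := by
  obtain ⟨i, hki, hpi⟩ := hpk
  have hW := RTree.tsum_gwWeight_eq_one p hsum hmean ⟨i, by omega, hpi⟩
  have hW_top : ∑' t, RTree.gwWeight p t ≠ ⊤ := hW ▸ ENNReal.one_ne_top
  have hm₂ : ∑' i : ℕ, (i : ℝ≥0∞) ^ 2 * p i ≠ ⊤ := by
    rw [tsum_sq_mul_eq_binomMoment, binomMoment_one hmean]
    exact ENNReal.add_ne_top.2 ⟨ENNReal.mul_ne_top ENNReal.ofNat_ne_top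
      (binomMoment_ne_top two_ne_zero (by omega) hmom.ne), ENNReal.one_ne_top⟩
  have htail := ENNReal.eventually_sq_le_of_tail
    (s := fun x => RTree.gwMass p (x ≤ RTree.Kreg k ·))
    (q := fun x => RTree.gwMass p (RTree.Kreg k · = x)) hk
    (fun _ => ne_top_of_le_ne_top hW_top (RTree.gwMass_le_tsum p _))
    (RTree.gwMass_le_eq_add p _) (RTree.tendsto_gwMass_le p hW_top _)
    (tsub_pos_of_lt hvarpos).ne' (ENNReal.sub_ne_top hm₂)
    (binomMoment_ne_top three_ne_zero (by omega) hmom.ne)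
    (binomMoment_ne_top (by omega) (by omega) hmom.ne)
    fun x => binomMoment_two_eq hmean ▸ RTree.binomMoment_two_mul_sq_le p hW hmean k x
  obtain ⟨x₀, hx₀⟩ := eventually_atTop.1 htail
  refine ⟨x₀ + 1, fun x hx => ?_⟩
  obtain ⟨y, rfl⟩ := Nat.exists_eq_add_of_le' (by omega : 1 ≤ x)
  rw [Nat.add_sub_cancel]
  exact ENNReal.le_rpow_half_mul_rpow_of_sq_le (hx₀ y (by omega))
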